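/- Let (Γ₁,...,Γ_d) be a cycle-free d-partition of K_{2d} whose last component Γ_d equals the twin-star graph Ω_d^{(d)} (centered at vertices 2d−1 and 2d). Then for each 1 ≤ i ≤ d−1, the graph Γ_i has exactly one edge incident to vertex 2d−1 and exactly one edge incident to vertex 2d. -/

import Mathlib

/-!
Counting edges, `d` acyclic graphs on `2d` vertices have at most `d(2d-1) = |E(K_{2d})|` edges
together, so every component of a cycle-free `d`-partition of `K_{2d}` is a spanning tree, and
hence has degree at least one at every vertex. At a centre `c` of `Ω_d^{(d)}` the degrees of the
`d` components add up to `2d-1`, of which `Ω_d^{(d)}` takes `d`; the remaining `d-1` components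
therefore have degree exactly one at `c`.
-/

open SimpleGraph

/-- A cycle-free `d`-partition of the complete graph on `Fin n`: each unordered pair of
distinct vertices is an edge of exactly one component, and every component is acyclic. -/
def IsCFP {n d : ℕ} (Γ : Fin d → SimpleGraph (Fin n)) : Prop :=
  (∀ u v : Fin n, u ≠ v → ∃! i, (Γ i).Adj u v) ∧ ∀ i, (Γ i).IsAcyclic

/-- `(u,v)` is the same unordered pair as `(a,b)`. -/
def SamePair {n : ℕ} (u v a b : Fin n) : Prop := (u = a ∧ v = b) ∨ (u = b ∧ v = a)

/-- The partitions `P` and `Q` differ on the edge `(u,v)`. -/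
def Differs {n d : ℕ} (P Q : Fin d → SimpleGraph (Fin n)) (u v : Fin n) : Prop :=
  ∃ i, ¬ ((Q i).Adj u v ↔ (P i).Adj u v)

/-- `Q` agrees with `P` on every edge except the edges `(x,y)`, `(x,z)`, `(y,z)`,
and differs from `P` on at least two of those three edges. -/
def FlipCond {n d : ℕ} (x y z : Fin n) (P Q : Fin d → SimpleGraph (Fin n)) : Prop :=
  (∀ u v : Fin n, ¬ SamePair u v x y → ¬ SamePair u v x z → ¬ SamePair u v y z →
      ∀ i, ((Q i).Adj u v ↔ (P i).Adj u v)) ∧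
  ((Differs P Q x y ∧ Differs P Q x z) ∨ (Differs P Q x y ∧ Differs P Q y z) ∨
    (Differs P Q x z ∧ Differs P Q y z))

/-- One involution move between cycle-free partitions. -/
def Step {n d : ℕ} (P Q : Fin d → SimpleGraph (Fin n)) : Prop :=
  IsCFP P ∧ IsCFP Q ∧ ∃ x y z : Fin n, x ≠ y ∧ x ≠ z ∧ y ≠ z ∧ FlipCond x y z P Q

/-- Involution equivalence: a finite sequence of involution moves. -/
def InvEquiv {n d : ℕ} : (Fin d → SimpleGraph (Fin n)) → (Fin d → SimpleGraph (Fin n)) → Prop :=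
  Relation.ReflTransGen Step

/-- The graph `Ω_t^{(d)}` on vertices `{1,…,2d}` (vertex `v : Fin (2d)` has label `v+1`):
the edge `(i,j)`, `i<j`, belongs to `Ω_t` iff `i+j` is even and `i ∈ {2t-1,2t}`,
or `i+j` is odd and `j ∈ {2t-1,2t}`. -/
def Omega (d t : ℕ) : SimpleGraph (Fin (2*d)) :=
  SimpleGraph.fromRel (fun u v =>
    u.1 < v.1 ∧
    (((u.1 + v.1) % 2 = 0 ∧ (u.1 + 1 = 2*t - 1 ∨ u.1 + 1 = 2*t)) ∨
     ((u.1 + v.1) % 2 = 1 ∧ (v.1 + 1 = 2*t - 1 ∨ v.1 + 1 = 2*t))))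

/-- The standard twin-star cycle-free `d`-partition `E_d = (Ω₁,…,Ω_d)`. -/
def Ed (d : ℕ) : Fin d → SimpleGraph (Fin (2*d)) := fun t => Omega d (t.1 + 1)

/-- The twin-star graph `TS_d` with `2d` vertices: centers `0` and `1` are adjacent,
center `0` is adjacent to the `d-1` leaves `2,…,d`, and center `1` to the leaves
`d+1,…,2d-1`. -/
def TwinStar (d : ℕ) : SimpleGraph (Fin (2*d)) :=
  SimpleGraph.fromRel (fun u v =>
    (u.1 = 0 ∧ 1 ≤ v.1 ∧ v.1 ≤ d) ∨ (u.1 = 1 ∧ d + 1 ≤ v.1))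

/-- The action of `(σ, τ) ∈ S_{2d} × S_d` on a `d`-partition: `σ` relabels vertices and
`τ` permutes the order of the components. -/
def actP {n d : ℕ} (σ : Equiv.Perm (Fin n)) (τ : Equiv.Perm (Fin d))
    (P : Fin d → SimpleGraph (Fin n)) : Fin d → SimpleGraph (Fin n) :=
  fun i => (P (τ⁻¹ i)).map σ.toEmbedding

/-- One step of weak equivalence: `P = (σ,τ) · (an involution move applied to Q)`. -/
def WStep {n d : ℕ} (P Q : Fin d → SimpleGraph (Fin n)) : Prop :=
  ∃ (σ : Equiv.Perm (Fin n)) (τ : Equiv.Perm (Fin d)) (R : Fin d → SimpleGraph (Fin n)),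
    Step Q R ∧ P = actP σ τ R

/-- Weak equivalence of cycle-free `d`-partitions. -/
def WeakEquiv {n d : ℕ} : (Fin d → SimpleGraph (Fin n)) → (Fin d → SimpleGraph (Fin n)) → Prop :=
  Relation.ReflTransGen WStep

open Finset

lemma Fin.card_filter_val_eq_count {n : ℕ} (p : ℕ → Prop) [DecidablePred p] :
    #{v : Fin n | p v.1} = Nat.count p n := by
  rw [Nat.count_eq_card_filter_range, ← Nat.Iio_eq_range, ← Fin.map_valEmbedding_univ,
    filter_map, card_map]
  rfl

lemma Fin.card_filter_modEq_two (d r : ℕ) : #{v : Fin (2 * d) | v.1 ≡ r [MOD 2]} = d := by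
  rw [Fin.card_filter_val_eq_count (· ≡ r [MOD 2]), Nat.count_modEq_card _ two_pos]
  simp

namespace SimpleGraph

section Acyclic
variable {V : Type*} [Fintype V] {G : SimpleGraph V} [DecidableRel G.Adj]

lemma IsAcyclic.card_edgeFinset_add_one_le [Nonempty V] (hG : G.IsAcyclic) :
    #G.edgeFinset + 1 ≤ Fintype.card V := by
  classical
  obtain ⟨T, hGT, -, hT⟩ := connected_top.exists_isTree_le_of_le_of_isAcyclic le_top hG
  rw [← hT.card_edgeFinset]
  gcongr

lemma IsAcyclic.isTree_of_card_edgeFinset (hG : G.IsAcyclic)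
    (h : #G.edgeFinset + 1 = Fintype.card V) : G.IsTree := by
  classical
  have : Nonempty V := Fintype.card_pos_iff.mp (by omega)
  obtain ⟨T, hGT, -, hT⟩ := connected_top.exists_isTree_le_of_le_of_isAcyclic le_top hG
  have hE : G.edgeFinset = T.edgeFinset :=
    eq_of_subset_of_card_le (edgeFinset_mono hGT) (by have := hT.card_edgeFinset; omega)
  rwa [edgeFinset_inj.mp hE]

end Acyclic

def IsEdgePartition {ι V : Type*} (Γ : ι → SimpleGraph V) : Prop :=
  ∀ u v, u ≠ v → ∃! i, (Γ i).Adj u v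

namespace IsEdgePartition
variable {ι V : Type*} [Fintype ι] [Fintype V] {Γ : ι → SimpleGraph V}
  [∀ i, DecidableRel (Γ i).Adj]

lemma sum_degree (hΓ : IsEdgePartition Γ) (v : V) :
    ∑ i, (Γ i).degree v = Fintype.card V - 1 := by
  classical
  have hdisj : ((univ : Finset ι) : Set ι).PairwiseDisjoint fun i ↦ (Γ i).neighborFinset v := by
    intro i _ j _ hij
    refine Finset.disjoint_left.mpr fun w hi hj ↦ hij ?_
    rw [mem_neighborFinset] at hi hj
    exact (hΓ v w hi.ne).unique hi hj
  have hcover : univ.biUnion (fun i ↦ (Γ i).neighborFinset v) = univ.erase v := by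
    ext w
    simp only [mem_biUnion, mem_univ, true_and, mem_neighborFinset, mem_erase, and_true]
    exact ⟨fun ⟨i, hi⟩ ↦ hi.ne', fun h ↦ (hΓ v w (Ne.symm h)).exists⟩
  simp_rw [← card_neighborFinset_eq_degree]
  rw [← card_biUnion hdisj, hcover, card_erase_of_mem (mem_univ v), card_univ]

lemma two_mul_sum_card_edgeFinset (hΓ : IsEdgePartition Γ) :
    2 * ∑ i, #(Γ i).edgeFinset = Fintype.card V * (Fintype.card V - 1) := by
  simp_rw [mul_sum, ← sum_degrees_eq_twice_card_edges]
  rw [sum_comm]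
  simp [hΓ.sum_degree]

lemma isTree (hΓ : IsEdgePartition Γ) (hacyc : ∀ i, (Γ i).IsAcyclic)
    (hcard : Fintype.card V = 2 * Fintype.card ι) (i : ι) : (Γ i).IsTree := by
  have : Nonempty V := Fintype.card_pos_iff.mp (by have := Fintype.card_pos_iff.mpr ⟨i⟩; omega)
  have hle : ∀ j ∈ univ, #(Γ j).edgeFinset ≤ Fintype.card V - 1 := fun j _ ↦
    Nat.le_sub_one_of_lt (hacyc j).card_edgeFinset_add_one_le
  have hsum : ∑ j, #(Γ j).edgeFinset = ∑ _j : ι, (Fintype.card V - 1) :=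
    Nat.eq_of_mul_eq_mul_left two_pos <| by
      rw [hΓ.two_mul_sum_card_edgeFinset, sum_const, card_univ, smul_eq_mul, hcard]
      ring
  have hi := (sum_eq_sum_iff_of_le hle).mp hsum i (mem_univ i)
  exact (hacyc i).isTree_of_card_edgeFinset (by have := Fintype.card_pos (α := V); omega)

lemma degree_eq_one [Nontrivial V] (hΓ : IsEdgePartition Γ)
    (hconn : ∀ i, (Γ i).Connected) {j : ι} {v : V}
    (hj : (Γ j).degree v + Fintype.card ι = Fintype.card V) {i : ι} (hij : i ≠ j) :
    (Γ i).degree v = 1 := by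
  classical
  have hpos : ∀ k ∈ univ.erase j, 1 ≤ (Γ k).degree v := fun k _ ↦
    (hconn k).preconnected.degree_pos_of_nontrivial v
  have hsum : ∑ _k ∈ univ.erase j, 1 = ∑ k ∈ univ.erase j, (Γ k).degree v := by
    have := hΓ.sum_degree v
    rw [← add_sum_erase _ _ (mem_univ j)] at this
    rw [sum_const, card_erase_of_mem (mem_univ j), card_univ, smul_eq_mul, mul_one]
    omega
  exact ((sum_eq_sum_iff_of_le hpos).mp hsum i (mem_erase.mpr ⟨hij, mem_univ i⟩)).symm

end IsEdgePartition
end SimpleGraph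

lemma omega_self_adj_iff {d : ℕ} {c v : Fin (2*d)} (hc : 2*d - 2 ≤ c.1) :
    (Omega d d).Adj c v ↔ v.1 ≡ c.1 + 1 [MOD 2] := by
  have := v.2
  simp only [Omega, fromRel_adj, ne_eq, Fin.ext_iff, Nat.ModEq]
  omega

lemma omega_self_degree_eq {d : ℕ} {c : Fin (2*d)} [Fintype ((Omega d d).neighborSet c)]
    (hc : 2*d - 2 ≤ c.1) : (Omega d d).degree c = d := by
  rw [← card_neighborFinset_eq_degree]
  convert Fin.card_filter_modEq_two d (c.1 + 1) using 2
  ext v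
  simp [omega_self_adj_iff hc]

/-- If the last component of a cycle-free `d`-partition of `K_{2d}` is the twin-star graph
`Ω_d^{(d)}` (centered at the vertices `2d-1` and `2d`), then every other component has
exactly one edge incident to the vertex `2d-1` and exactly one edge incident to `2d`. -/
theorem unique_edge_at_centers (d : ℕ) (hd : 0 < d)
    (Γ : Fin d → SimpleGraph (Fin (2*d))) (hΓ : IsCFP Γ)
    (hlast : Γ ⟨d-1, by omega⟩ = Omega d d) :
    ∀ i : Fin d, i.1 < d - 1 →
      (∃! u : Fin (2*d), (Γ i).Adj ⟨2*d-2, by omega⟩ u) ∧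
      (∃! u : Fin (2*d), (Γ i).Adj ⟨2*d-1, by omega⟩ u) := by
  classical
  intro i hi
  obtain ⟨hpart, hacyc⟩ := hΓ
  have htree : ∀ j, (Γ j).IsTree :=
    IsEdgePartition.isTree hpart hacyc (by simp only [Fintype.card_fin])
  have : Nontrivial (Fin (2*d)) := Fin.nontrivial_iff_two_le.mpr (by omega)
  have hi_ne : i ≠ ⟨d-1, by omega⟩ := fun h ↦ by simp [h] at hi
  have hcentre : ∀ c : Fin (2*d), 2*d - 2 ≤ c.1 → ∃! u, (Γ i).Adj c u := fun c hc ↦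
    degree_eq_one_iff_existsUnique_adj.mp <|
      IsEdgePartition.degree_eq_one hpart (fun j ↦ (htree j).connected)
        (by rw [hlast, omega_self_degree_eq hc, Fintype.card_fin, Fintype.card_fin]; omega) hi_ne
  exact ⟨hcentre _ le_rfl, hcentre _ (by simp only; omega)⟩
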